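/- Let d ≥ 1 be an integer and let V_d be the volume of the ball of radius 1 in ℝ^d. Let α ∈ (0, 1/2) and let n be an integer with log(2/(3α)) ≤ n, and set r := (−log(3α/2)/(2 V_d n))^{1/d}. If X_1,…,X_n are independent uniform random points in [0,1]^d, then the probability that no index j ∈ {2,…,n} satisfies ‖X_j − X_1‖ ≤ r (Euclidean norm) is at least 3α/2. -/

import Mathlib

/-!
Condition on the first point `X₁ = x`. The other `n - 1` points are independent and uniform on
the unit cube, and each falls into `closedBall x r` with probability at most its volume
`V_d r^d = t / (2n)`, where `t = log (2 / (3α)) ≤ n`. Hence the probability that all of them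
avoid the ball is at least `(1 - t / (2n))^(n-1) ≥ exp (-t) = 3α/2`, the last inequality
coming from `exp (-2x) ≤ 1 - x` on `[0, 1/2]`.
-/

open MeasureTheory

/-- The uniform probability measure on `n` independent points in `[0,1]^d`. -/
noncomputable def unifCube (d n : ℕ) :
    Measure (Fin n → EuclideanSpace ℝ (Fin d)) :=
  (volume : Measure (Fin n → EuclideanSpace ℝ (Fin d))).restrict
    {x | ∀ i, ∀ k, x i k ∈ Set.Icc (0 : ℝ) 1}

/-- The volume of the Euclidean unit ball in `ℝ^d`. -/
noncomputable def unitBallVol (d : ℕ) : ℝ :=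
  (volume (Metric.closedBall (0 : EuclideanSpace ℝ (Fin d)) 1)).toReal

open Metric Set
open scoped ENNReal

lemma Real.exp_neg_two_mul_le_one_sub {x : ℝ} (hx0 : 0 ≤ x) (hx : x ≤ 1 / 2) :
    Real.exp (-(2 * x)) ≤ 1 - x := by
  -- `exp (-2x) ≤ 1 / (1 + 2x)` and `(1 - x) (1 + 2x) = 1 + x (1 - 2x) ≥ 1`
  have hexp : 1 + 2 * x ≤ Real.exp (2 * x) := by linarith [Real.add_one_le_exp (2 * x)]
  rw [Real.exp_neg, inv_le_iff_one_le_mul₀ (Real.exp_pos _)]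
  nlinarith

lemma Real.exp_neg_le_one_sub_div_pow {t : ℝ} {n m : ℕ} (ht : 0 ≤ t) (htn : t ≤ n)
    (hmn : m ≤ n) : Real.exp (-t) ≤ (1 - t / (2 * n)) ^ m := by
  rcases n.eq_zero_or_pos with rfl | hn
  · obtain rfl : m = 0 := by omega
    simp [le_antisymm (by simpa using htn) ht]
  have hn' : (0 : ℝ) < n := by exact_mod_cast hn
  have hx0 : 0 ≤ t / (2 * n) := by positivity
  have hx : t / (2 * n) ≤ 1 / 2 := by
    rw [div_le_div_iff₀ (by positivity) two_pos]; linarith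
  calc Real.exp (-t) = Real.exp (-(2 * (t / (2 * n)))) ^ n := by
        rw [← Real.exp_nat_mul]; congr 1; field_simp
    _ ≤ (1 - t / (2 * n)) ^ n := by
        gcongr
        exact Real.exp_neg_two_mul_le_one_sub hx0 hx
    _ ≤ (1 - t / (2 * n)) ^ m := pow_le_pow_of_le_one (by linarith) (by linarith) hmn

section Isolated

variable {α : Type*} [MeasurableSpace α] (ν : Measure α) [IsProbabilityMeasure ν]

lemma one_sub_pow_le_pi_forall_not_mem {S : Set (α × α)} (hS : MeasurableSet S)
    {p : ℝ≥0∞} (hp : ∀ x, ν (Prod.mk x ⁻¹' S) ≤ p) (m : ℕ) :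
    (1 - p) ^ m ≤ Measure.pi (fun _ : Fin (m + 1) => ν) {x | ∀ j ≠ 0, (x 0, x j) ∉ S} := by
  set T : Set (α × (Fin m → α)) := {q | ∀ j, (q.1, q.2 j) ∉ S}
  have hT : MeasurableSet T := by
    simp only [T, ofPred_forall]
    exact .iInter fun j => (measurable_fst.prodMk ((measurable_pi_apply j).comp
      measurable_snd) hS).compl
  have hpre : {x : Fin (m + 1) → α | ∀ j ≠ 0, (x 0, x j) ∉ S} =
      MeasurableEquiv.piFinSuccAbove (fun _ => α) 0 ⁻¹' T := by
    ext x
    simp [T, Fin.forall_fin_succ, Fin.succ_ne_zero, Fin.tail]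
  have hsection (x : α) : 1 - p ≤ ν (Prod.mk x ⁻¹' S)ᶜ := by
    rw [measure_compl (measurable_prodMk_left hS) (measure_ne_top _ _), measure_univ]
    exact tsub_le_tsub_left (hp x) 1
  rw [hpre, (measurePreserving_piFinSuccAbove (fun _ => ν) 0).measure_preimage
    hT.nullMeasurableSet, Measure.prod_apply hT]
  calc (1 - p) ^ m = ∫⁻ _, (1 - p) ^ m ∂ν := by simp
    _ ≤ ∫⁻ x, Measure.pi (fun _ => ν) (univ.pi fun _ : Fin m => (Prod.mk x ⁻¹' S)ᶜ) ∂ν := by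
        gcongr with x
        rw [Measure.pi_pi, Finset.prod_const, Finset.card_univ, Fintype.card_fin]
        exact pow_le_pow_left' (hsection x) m
    _ = ∫⁻ x, Measure.pi (fun _ => ν) (Prod.mk x ⁻¹' T) ∂ν := by
        congr! 3 with x
        ext y
        simp [T]

end Isolated

def unitCube (d : ℕ) : Set (EuclideanSpace ℝ (Fin d)) := {y | ∀ k, y k ∈ Icc (0 : ℝ) 1}

lemma unitCube_eq_preimage (d : ℕ) :
    unitCube d = WithLp.ofLp ⁻¹' Icc 0 1 := by
  ext y; simp [unitCube, Pi.le_def, forall_and]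

lemma volume_unitCube (d : ℕ) : volume (unitCube d) = 1 := by
  rw [unitCube_eq_preimage, (PiLp.volume_preserving_ofLp (ι := Fin d)).measure_preimage
    measurableSet_Icc.nullMeasurableSet, Real.volume_Icc_pi]
  simp

instance (d : ℕ) : IsProbabilityMeasure (volume.restrict (unitCube d)) :=
  ⟨by rw [Measure.restrict_apply_univ, volume_unitCube]⟩

lemma unifCube_eq_pi (d n : ℕ) :
    unifCube d n = Measure.pi fun _ => volume.restrict (unitCube d) := by
  rw [unifCube, volume_pi, ← Measure.restrict_pi_pi]
  congr 1
  ext x; simp [unitCube]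

lemma volume_closedBall_eq_unitBallVol_mul {d : ℕ} (x : EuclideanSpace ℝ (Fin d)) {r : ℝ}
    (hr : 0 ≤ r) : volume (closedBall x r) = ENNReal.ofReal (unitBallVol d * r ^ d) := by
  rw [Measure.addHaar_closedBall' volume x hr, finrank_euclideanSpace_fin, unitBallVol,
    ENNReal.ofReal_mul ENNReal.toReal_nonneg, ENNReal.ofReal_toReal measure_closedBall_lt_top.ne,
    mul_comm]

lemma unitBallVol_pos (d : ℕ) : 0 < unitBallVol d :=
  ENNReal.toReal_pos (measure_closedBall_pos volume _ one_pos).ne' measure_closedBall_lt_top.ne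

/-- With `r = (-log(3α/2)/(2 V_d n))^{1/d}` and `log(2/(3α)) ≤ n`, the probability that
no point among `X_2, …, X_n` lies within distance `r` of `X_1` is at least `3α/2`. -/
theorem prob_isolated_ge (d : ℕ) (hd : 1 ≤ d) (α : ℝ) (hα0 : 0 < α)
    (hα : α < 1 / 2) (n : ℕ) (hn : 0 < n)
    (hlog : Real.log (2 / (3 * α)) ≤ n)
    (r : ℝ)
    (hr : r = (-Real.log (3 * α / 2) / (2 * unitBallVol d * n)) ^ ((1 : ℝ) / d)) :
    ENNReal.ofReal (3 * α / 2)
      ≤ unifCube d n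
          {x | ∀ j : Fin n, j ≠ ⟨0, hn⟩ → ¬ dist (x j) (x ⟨0, hn⟩) ≤ r} := by
  obtain ⟨m, rfl⟩ : ∃ m, n = m + 1 := ⟨n - 1, by omega⟩
  rw [← inv_div, Real.log_inv] at hlog
  set t := -Real.log (3 * α / 2)
  have ht : 0 < t := neg_pos.2 (Real.log_neg (by linarith) (by linarith))
  have hr0 : 0 ≤ r := hr ▸ by positivity [unitBallVol_pos d]
  have hball : unitBallVol d * r ^ d = t / (2 * (m + 1 : ℕ)) := by
    rw [hr, one_div, Real.rpow_inv_natCast_pow (by positivity [unitBallVol_pos d]) (by omega)]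
    field_simp [(unitBallVol_pos d).ne']
  have hsection (x : EuclideanSpace ℝ (Fin d)) :
      volume.restrict (unitCube d) (closedBall x r) ≤ ENNReal.ofReal (t / (2 * (m + 1 : ℕ))) :=
    (Measure.restrict_le_self _).trans
      (by rw [volume_closedBall_eq_unitBallVol_mul x hr0, hball])
  rw [unifCube_eq_pi]
  refine le_trans ?_ (one_sub_pow_le_pi_forall_not_mem _
    (S := {q | dist q.2 q.1 ≤ r}) (measurableSet_le (by fun_prop) (by fun_prop)) hsection m)
  have hx : t / (2 * (m + 1 : ℕ)) ≤ 1 := by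
    rw [div_le_one (by positivity)]; linarith [(m + 1).cast_nonneg (α := ℝ)]
  rw [← ENNReal.ofReal_one, ← ENNReal.ofReal_sub _ (by positivity),
    ← ENNReal.ofReal_pow (by linarith)]
  gcongr
  calc 3 * α / 2 = Real.exp (-t) := by rw [neg_neg, Real.exp_log (by linarith)]
    _ ≤ _ := Real.exp_neg_le_one_sub_div_pow ht.le hlog m.le_succ
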